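/- arXiv:1307.6292 — 2 statements merged into one kernel-verified Lean document; each statement's English description precedes it below -/
import Mathlib

section
/- Let n ≥ 4 with n ≡ 0 mod 4, a ∈ ((n−2)/(n+2),1), and define for 1 ≤ k ≤ n/2 − 1 the polynomials by the Cohn iteration starting from q(z) = z^n + Σ_{j=1}^{n/2−1}(−1)^{j+1}(a−1)z^{n−2j} − c where c = (1/2)(2a+an−n). Then the final iterate is (up to a positive constant multiple) the polynomial (n−1)z² − 1, whose zeros ±1/√(n−1) lie inside the unit circle; consequently every zero of q lies in the open unit disk. -/
/-!
With `w = -z²` and `m = n / 2` (even, as `4 ∣ n`), `q(z)` becomes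
`w^m + (1 - a)(w + ⋯ + w^(m-1)) - c` with `c = a - (1 - a) m`, and multiplying by `w - 1` turns
`q(z) = 0` into `w^m (w - a) = d w - c` with `d = 1 - (1 - a) m`. For `|w| ≥ 1`, `w ≠ 1`, the
condition `a > (n - 2)/(n + 2)`, i.e. `(1 - a)(m + 1) < 2`, forces `|d w - c| < |w - a| ≤ |w^m (w - a)|`,
which is absurd; and `w = 1` is not a root. Hence `|z|² = |w| < 1`.
-/

open Finset

lemma sub_one_mul_pow_add_mul_geom_sum_Ico_sub {R : Type*} [CommRing R] (w b c : R) {m : ℕ}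
    (hm : 1 ≤ m) :
    (w - 1) * (w ^ m + b * ∑ k ∈ Ico 1 m, w ^ k - c)
      = w ^ m * (w - (1 - b)) - ((b + c) * w - c) := by
  linear_combination b * geom_sum_Ico_mul w hm

lemma alternating_sum_eq_geom_sum_Ico_neg_sq {R : Type*} [CommRing R] (b z : R) {n m : ℕ}
    (hm : Even m) (hnm : n = 2 * m) :
    z ^ n + ∑ j ∈ Icc 1 (n / 2 - 1), (-1 : R) ^ (j + 1) * b * z ^ (n - 2 * j)
      = (-z ^ 2) ^ m - b * ∑ k ∈ Ico 1 m, (-z ^ 2) ^ k := by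
  subst hnm
  rw [Nat.mul_div_cancel_left m two_pos, mul_sum, hm.neg_pow, ← pow_mul, sub_eq_add_neg,
    ← sum_neg_distrib]
  congr 1
  refine sum_nbij' (m - ·) (m - ·) ?_ ?_ ?_ ?_ ?_ <;> intro j hj <;>
    simp only [mem_Icc, mem_Ico] at hj
  · simp only [mem_Ico]; omega
  · simp only [mem_Icc]; omega
  · omega
  · omega
  · have hsign : (-1 : R) ^ (m - j) * (-1) ^ j = 1 := by
      rw [← pow_add, Nat.sub_add_cancel (by omega), hm.neg_one_pow]
    have hsq : (-1 : R) ^ j * (-1) ^ j = 1 := by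
      rw [← pow_add, ← two_mul, pow_mul, neg_one_sq, one_pow]
    rw [neg_pow (z ^ 2), ← pow_mul, show 2 * m - 2 * j = 2 * (m - j) by omega, pow_succ]
    linear_combination (b * z ^ (2 * (m - j))) * ((-1) ^ j * hsign - (-1) ^ (m - j) * hsq)

lemma norm_mul_sub_lt_norm_sub {a M : ℝ} (hM : 0 < M) (ha : a < 1)
    (haM : (1 - a) * (M + 1) < 2) {w : ℂ} (hw : 1 ≤ ‖w‖) (hw1 : w ≠ 1) :
    ‖((1 - (1 - a) * M : ℝ) : ℂ) * w - ((a - (1 - a) * M : ℝ) : ℂ)‖ < ‖w - a‖ := by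
  set u := 1 - a
  set s := 2 - u * M
  have huM : 0 < u * M := mul_pos (by simp [u, ha]) hM
  have hus : u < s := by linarith
  have hxy : 1 ≤ w.re ^ 2 + w.im ^ 2 := by
    nlinarith [Complex.sq_norm w, Complex.normSq_apply w]
  have hdist : 0 < (w.re - 1) ^ 2 + w.im ^ 2 := by
    simpa [Complex.normSq_apply, sq] using Complex.normSq_pos.mpr (sub_ne_zero.mpr hw1)
  -- `‖w - a‖² - ‖(1 - uM) w - (a - uM)‖² = uM (s ‖w - 1‖² + 2u (Re w - 1))`, and the bracket
  -- is positive: if `Re w < 1`, then `‖w - 1‖² ≥ 2 (1 - Re w)` because `‖w‖ ≥ 1`.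
  have key : 0 < s * ((w.re - 1) ^ 2 + w.im ^ 2) + 2 * u * (w.re - 1) := by
    rcases le_or_gt 1 w.re with hx | hx
    · nlinarith
    · nlinarith
  refine lt_of_pow_lt_pow_left₀ 2 (norm_nonneg _) ?_
  simp only [Complex.sq_norm, Complex.normSq_apply, Complex.sub_re, Complex.sub_im,
    Complex.mul_re, Complex.mul_im, Complex.ofReal_re, Complex.ofReal_im]
  linarith [mul_pos huM key]

lemma norm_lt_one_of_pow_add_geom_sum_Ico_eq_zero {a : ℝ} {m : ℕ} (hm : 1 ≤ m) (ha : a < 1)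
    (ham : (1 - a) * (m + 1) < 2) {w : ℂ}
    (hw : w ^ m + (1 - a) * ∑ k ∈ Ico 1 m, w ^ k - (a - (1 - a) * m) = 0) : ‖w‖ < 1 := by
  by_contra! hw_ge
  have hw1 : w ≠ 1 := by
    rintro rfl
    simp only [one_pow, sum_const, Nat.card_Ico, nsmul_eq_mul, mul_one, Nat.cast_sub hm] at hw
    have h : ((2 * m * (1 - a) : ℝ) : ℂ) = 0 := by push_cast; linear_combination hw
    rw [Complex.ofReal_eq_zero] at h
    exact (mul_pos (by positivity) (sub_pos.mpr ha)).ne' h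
  have hfac : w ^ m * (w - a) = (1 - (1 - a) * m) * w - (a - (1 - a) * m) := by
    linear_combination
      (w - 1) * hw - sub_one_mul_pow_add_mul_geom_sum_Ico_sub w (1 - a) (a - (1 - a) * m) hm
  have hlt := norm_mul_sub_lt_norm_sub (M := m) (by exact_mod_cast hm) ha ham hw_ge hw1
  push_cast at hlt
  rw [← hfac, norm_mul, norm_pow] at hlt
  exact hlt.not_ge (le_mul_of_one_le_left (norm_nonneg _) (one_le_pow₀ hw_ge))

lemma norm_lt_one_of_sub_one_mul_sq_sub_one_eq_zero {N : ℝ} (hN : 2 < N) {z : ℂ}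
    (hz : ((N : ℂ) - 1) * z ^ 2 - 1 = 0) : ‖z‖ < 1 := by
  by_contra! h
  have hnorm : ‖((N : ℂ) - 1) * z ^ 2‖ = 1 := by rw [sub_eq_zero.mp hz, norm_one]
  rw [norm_mul, norm_pow, ← Complex.ofReal_one, ← Complex.ofReal_sub, Complex.norm_real,
    Real.norm_of_nonneg (by linarith)] at hnorm
  nlinarith [one_le_pow₀ (n := 2) h]

theorem stmt_18_general (n : ℕ) (hn : 4 ≤ n) (hdvd : 4 ∣ n) (a : ℝ)
    (ha : ((n : ℝ) - 2) / ((n : ℝ) + 2) < a) (ha' : a < 1) :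
    (∀ z : ℂ, ((n : ℂ) - 1) * z ^ 2 - 1 = 0 → ‖z‖ < 1) ∧
    (∀ z : ℂ,
      z ^ n + (∑ j ∈ Finset.Icc 1 (n / 2 - 1), (-1 : ℂ) ^ (j + 1) * ((a : ℂ) - 1) * z ^ (n - 2 * j))
        - (1 / 2) * (2 * a + a * n - n) = 0 → ‖z‖ < 1) := by
  have hn' : (4 : ℝ) ≤ n := by exact_mod_cast hn
  refine ⟨fun z hz => norm_lt_one_of_sub_one_mul_sq_sub_one_eq_zero (N := n) (by linarith)
    (by exact_mod_cast hz), fun z hz => ?_⟩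
  obtain ⟨t, rfl⟩ := hdvd
  rw [alternating_sum_eq_geom_sum_Ico_neg_sq _ z (even_two_mul t) (by ring)] at hz
  rw [div_lt_iff₀ (by linarith)] at ha
  push_cast at ha hz
  have hw : ‖-z ^ 2‖ < 1 := by
    refine norm_lt_one_of_pow_add_geom_sum_Ico_eq_zero (m := 2 * t) (by omega) ha'
      (by push_cast; linarith) ?_
    push_cast
    linear_combination hz
  rwa [norm_neg, norm_pow, pow_lt_one_iff_of_nonneg (norm_nonneg z) two_ne_zero] at hw

theorem stmt_18 (n : ℕ) (hn : 4 ≤ n) (hdvd : 4 ∣ n) (a : ℝ)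
    (ha : ((n : ℝ) - 2) / ((n : ℝ) + 2) < a) (ha' : a < 1) (ha'' : a ≠ (n : ℝ) / ((n : ℝ) + 2)) :
    (∀ z : ℂ, ((n : ℂ) - 1) * z ^ 2 - 1 = 0 → ‖z‖ < 1) ∧
    (∀ z : ℂ,
      z ^ n + (∑ j ∈ Finset.Icc 1 (n / 2 - 1), (-1 : ℂ) ^ (j + 1) * ((a : ℂ) - 1) * z ^ (n - 2 * j))
        - (1 / 2) * (2 * a + a * n - n) = 0 → ‖z‖ < 1) :=
  stmt_18_general n hn hdvd a ha ha'
end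

section
/- Let θ ∈ ℝ, n ∈ ℕ with n ≥ 1, a ∈ (−1,1), and suppose ω(z) = e^{iθ} z^n. Then the expression ω̃(z) = [2ω(1+ω)(a + z²) − z ω'(1−a)(1+z²)] / [2(1 + a z²)(1+ω) − z ω'(1−a)(1+z²)] (the case β = π/2 of the convolution dilatation formula) simplifies to ω̃(z) = z^n e^{2iθ} · p(z)/p*(z), where p(z) = z^{n+2} + a z^n + (1/2)(2 + an − n)e^{−iθ} z² + (1/2)(2a + an − n)e^{−iθ} and p*(z) = (1/2)(2a + an − n)e^{iθ} z^{n+2} + (1/2)(2 + an − n)e^{iθ} z^n + a z² + 1, valid for all z where the denominators are nonzero. -/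
/-- `z ω'(z) = n ω(z)` for `ω = c z ^ n`; at `n = 0` the truncated `n - 1` is harmless
because the factor `n` vanishes. -/
theorem mul_natCast_mul_mul_pow_sub_one {R : Type*} [CommSemiring R] (n : ℕ) (c z : R) :
    z * ((n : R) * c * z ^ (n - 1)) = n * c * z ^ n := by
  cases n with
  | zero => simp
  | succ m => rw [Nat.add_sub_cancel, pow_succ]; ring

theorem stmt_19_general (θ : ℝ) (n : ℕ) (a : ℝ) (z : ℂ)
    (hden : 2 * (1 + (a : ℂ) * z ^ 2) * (1 + Complex.exp (θ * Complex.I) * z ^ n)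
        - z * ((n : ℂ) * Complex.exp (θ * Complex.I) * z ^ (n - 1)) * (1 - (a : ℂ)) * (1 + z ^ 2)
        ≠ 0)
    (hpstar : (1 / 2) * (2 * a + a * n - n) * Complex.exp (θ * Complex.I) * z ^ (n + 2)
        + (1 / 2) * (2 + a * n - n) * Complex.exp (θ * Complex.I) * z ^ n
        + (a : ℂ) * z ^ 2 + 1 ≠ 0) :
    (2 * (Complex.exp (θ * Complex.I) * z ^ n) * (1 + Complex.exp (θ * Complex.I) * z ^ n)
          * ((a : ℂ) + z ^ 2)
        - z * ((n : ℂ) * Complex.exp (θ * Complex.I) * z ^ (n - 1)) * (1 - (a : ℂ)) * (1 + z ^ 2))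
      / (2 * (1 + (a : ℂ) * z ^ 2) * (1 + Complex.exp (θ * Complex.I) * z ^ n)
        - z * ((n : ℂ) * Complex.exp (θ * Complex.I) * z ^ (n - 1)) * (1 - (a : ℂ)) * (1 + z ^ 2))
    = z ^ n * Complex.exp (2 * θ * Complex.I) *
        (z ^ (n + 2) + (a : ℂ) * z ^ n
          + (1 / 2) * (2 + a * n - n) * Complex.exp (-(θ * Complex.I)) * z ^ 2
          + (1 / 2) * (2 * a + a * n - n) * Complex.exp (-(θ * Complex.I)))
      / ((1 / 2) * (2 * a + a * n - n) * Complex.exp (θ * Complex.I) * z ^ (n + 2)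
          + (1 / 2) * (2 + a * n - n) * Complex.exp (θ * Complex.I) * z ^ n
          + (a : ℂ) * z ^ 2 + 1) := by
  rw [div_eq_div_iff hden hpstar]
  set E := Complex.exp (θ * Complex.I)
  have hE : E ≠ 0 := Complex.exp_ne_zero _
  have hE_sq : Complex.exp (2 * θ * Complex.I) = E ^ 2 := by
    rw [← Complex.exp_nat_mul]; ring_nf
  rw [hE_sq, Complex.exp_neg, mul_natCast_mul_mul_pow_sub_one]
  field_simp
  ring

theorem stmt_19 (θ : ℝ) (n : ℕ) (hn : 1 ≤ n) (a : ℝ) (ha : -1 < a) (ha' : a < 1) (z : ℂ)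
    (hden : 2 * (1 + (a : ℂ) * z ^ 2) * (1 + Complex.exp (θ * Complex.I) * z ^ n)
        - z * ((n : ℂ) * Complex.exp (θ * Complex.I) * z ^ (n - 1)) * (1 - (a : ℂ)) * (1 + z ^ 2)
        ≠ 0)
    (hpstar : (1 / 2) * (2 * a + a * n - n) * Complex.exp (θ * Complex.I) * z ^ (n + 2)
        + (1 / 2) * (2 + a * n - n) * Complex.exp (θ * Complex.I) * z ^ n
        + (a : ℂ) * z ^ 2 + 1 ≠ 0) :
    (2 * (Complex.exp (θ * Complex.I) * z ^ n) * (1 + Complex.exp (θ * Complex.I) * z ^ n)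
          * ((a : ℂ) + z ^ 2)
        - z * ((n : ℂ) * Complex.exp (θ * Complex.I) * z ^ (n - 1)) * (1 - (a : ℂ)) * (1 + z ^ 2))
      / (2 * (1 + (a : ℂ) * z ^ 2) * (1 + Complex.exp (θ * Complex.I) * z ^ n)
        - z * ((n : ℂ) * Complex.exp (θ * Complex.I) * z ^ (n - 1)) * (1 - (a : ℂ)) * (1 + z ^ 2))
    = z ^ n * Complex.exp (2 * θ * Complex.I) *
        (z ^ (n + 2) + (a : ℂ) * z ^ n
          + (1 / 2) * (2 + a * n - n) * Complex.exp (-(θ * Complex.I)) * z ^ 2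
          + (1 / 2) * (2 * a + a * n - n) * Complex.exp (-(θ * Complex.I)))
      / ((1 / 2) * (2 * a + a * n - n) * Complex.exp (θ * Complex.I) * z ^ (n + 2)
          + (1 / 2) * (2 + a * n - n) * Complex.exp (θ * Complex.I) * z ^ n
          + (a : ℂ) * z ^ 2 + 1) :=
  stmt_19_general θ n a z hden hpstar
end
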